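/- arXiv:2312.15781 — 5 statements merged into one kernel-verified Lean document; each statement's English description precedes it below -/
import Mathlib

section
/- Let S be a symmetric positive semidefinite p×p real matrix. Then the type-II ridge estimator tends to the zero matrix as λ → ∞: lim_{λ→∞} [(λI + (1/4)S²)^{1/2} + (1/2)S]⁻¹ = 0. -/
/-!
Since `f λ ^ 2 = λ • 1 + S ^ 2 / 4 ≥ λ • 1` and `f λ` is positive, looking at eigenvectors of
`f λ` gives `f λ ≥ √λ • 1`; adding the positive semidefinite `S / 2` keeps this lower bound,
so every entry of the inverse is at most `1 / √λ` in absolute value.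
-/

open Matrix Filter

open scoped MatrixOrder

namespace Matrix

variable {n : Type*} [Fintype n] [DecidableEq n]

lemma mul_dotProduct_self_le_of_smul_one_le {M : Matrix n n ℝ} {c : ℝ}
    (hM : c • 1 ≤ M) (x : n → ℝ) : c * (x ⬝ᵥ x) ≤ x ⬝ᵥ (M *ᵥ x) := by
  have h := (le_iff.mp hM).dotProduct_mulVec_nonneg x
  simp only [star_trivial, sub_mulVec, smul_mulVec, one_mulVec, dotProduct_sub,
    dotProduct_smul, smul_eq_mul] at h
  linarith

lemma smul_one_le_of_sq_le {F : Matrix n n ℝ} {c : ℝ} (hF : F.PosSemidef)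
    (h : c ^ 2 • 1 ≤ F ^ 2) : c • 1 ≤ F := by
  have hH : (F - c • 1).IsHermitian := hF.isHermitian.sub (isHermitian_one.smul (.all c))
  refine (hH.posSemidef_iff_eigenvalues_nonneg.mpr fun i => ?_ : (F - c • 1).PosSemidef)
  set μ := hH.eigenvalues i
  set v : n → ℝ := ⇑(hH.eigenvectorBasis i)
  have hv0 : v ≠ 0 := fun hz =>
    hH.eigenvectorBasis.orthonormal.ne_zero i (by ext k; exact congrFun hz k)
  have hv : 0 < v ⬝ᵥ v := by simpa using dotProduct_star_self_pos_iff.mpr hv0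
  have hFv : F *ᵥ v = (μ + c) • v := by
    have := hH.mulVec_eigenvectorBasis i
    rw [sub_mulVec, smul_mulVec, one_mulVec, sub_eq_iff_eq_add] at this
    rw [this, add_smul]
  have hF2v : F ^ 2 *ᵥ v = (μ + c) ^ 2 • v := by
    rw [sq, ← mulVec_mulVec, hFv, mulVec_smul, hFv, smul_smul, sq]
  have hsq : c ^ 2 * (v ⬝ᵥ v) ≤ (μ + c) ^ 2 * (v ⬝ᵥ v) := by
    simpa only [hF2v, dotProduct_smul, smul_eq_mul] using
      mul_dotProduct_self_le_of_smul_one_le h v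
  have hnonneg : 0 ≤ (μ + c) * (v ⬝ᵥ v) := by
    simpa only [star_trivial, hFv, dotProduct_smul, smul_eq_mul] using
      hF.dotProduct_mulVec_nonneg v
  have hsq' := le_of_mul_le_mul_right hsq hv
  have hnonneg' := nonneg_of_mul_nonneg_left hnonneg hv
  -- `μ + c ≥ 0` and `(μ + c) ^ 2 ≥ c ^ 2` give `μ + c ≥ |c|`.
  show 0 ≤ μ
  nlinarith

/-- With `y = M⁻¹ eⱼ`, the bound gives `c ‖y‖² ≤ yⱼ ≤ ‖y‖`, hence `‖y‖ ≤ c⁻¹`. -/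
lemma abs_inv_apply_le_of_smul_one_le {M : Matrix n n ℝ} {c : ℝ} (hc : 0 < c)
    (hM : c • 1 ≤ M) (i j : n) : |M⁻¹ i j| ≤ c⁻¹ := by
  have hMpos : M.PosDef := by
    simpa using PosDef.posSemidef_add (le_iff.mp hM) (PosDef.one.smul hc)
  set y := M⁻¹ *ᵥ Pi.single j 1
  have hMy : M *ᵥ y = Pi.single j 1 := by
    rw [mulVec_mulVec, mul_nonsing_inv M (isUnit_iff_ne_zero.mpr hMpos.det_pos.ne'),
      one_mulVec]
  have hy : c * (y ⬝ᵥ y) ≤ y j := by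
    simpa [hMy, dotProduct_single] using mul_dotProduct_self_le_of_smul_one_le hM y
  have hcoord (k : n) : y k ^ 2 ≤ y ⬝ᵥ y := by
    rw [sq]
    exact Finset.single_le_sum (fun m _ => mul_self_nonneg (y m)) (Finset.mem_univ k)
  have hyj : c * y j ≤ 1 := by
    have : (c * y j) ^ 2 ≤ c * y j := by
      calc (c * y j) ^ 2 = c * (c * y j ^ 2) := by ring
        _ ≤ c * (c * (y ⬝ᵥ y)) := by gcongr; exact hcoord j
        _ ≤ c * y j := by gcongr
    nlinarith
  have hyi : (c * y i) ^ 2 ≤ 1 :=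
    calc (c * y i) ^ 2 = c * (c * y i ^ 2) := by ring
      _ ≤ c * (c * (y ⬝ᵥ y)) := by gcongr; exact hcoord i
      _ ≤ c * y j := by gcongr
      _ ≤ 1 := hyj
  have hentry : y i = M⁻¹ i j := by simp [y, mulVec_single]
  have habs : |c * y i| ≤ 1 := (sq_le_one_iff_abs_le_one _).mp hyi
  calc |M⁻¹ i j| = c⁻¹ * |c * y i| := by
        rw [← hentry, abs_mul, abs_of_pos hc, inv_mul_cancel_left₀ hc.ne']
    _ ≤ c⁻¹ := mul_le_of_le_one_right (inv_nonneg.mpr hc.le) habs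

end Matrix

/-- For S symmetric PSD, the type-II ridge estimator tends to the
zero matrix as λ → ∞. Here `f l` denotes the (unique) symmetric positive
definite square root of λI + (1/4)S². -/
theorem stmt6 (p : ℕ) (S : Matrix (Fin p) (Fin p) ℝ) (hS : S.PosSemidef)
    (f : ℝ → Matrix (Fin p) (Fin p) ℝ)
    (hf : ∀ l, 0 < l → (f l).PosDef ∧
      (f l) ^ 2 = l • (1 : Matrix (Fin p) (Fin p) ℝ) + (1/4 : ℝ) • S ^ 2) :
    Tendsto (fun l : ℝ => (f l + (1/2 : ℝ) • S)⁻¹)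
      atTop (nhds (0 : Matrix (Fin p) (Fin p) ℝ)) := by
  have hbound : ∀ᶠ l in atTop, ∀ i j, |(f l + (1/2 : ℝ) • S)⁻¹ i j| ≤ (√l)⁻¹ := by
    filter_upwards [eventually_gt_atTop 0] with l hl i j
    obtain ⟨hpos, hsq⟩ := hf l hl
    have hsqrt : √l • 1 ≤ f l := by
      refine smul_one_le_of_sq_le hpos.posSemidef ?_
      rw [Real.sq_sqrt hl.le, le_iff, hsq, add_sub_cancel_left]
      exact (hS.pow 2).smul (by norm_num)
    have hridge : f l ≤ f l + (1/2 : ℝ) • S :=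
      le_add_of_nonneg_right (hS.smul (by norm_num)).nonneg
    exact abs_inv_apply_le_of_smul_one_le (Real.sqrt_pos.mpr hl) (hsqrt.trans hridge) i j
  have hlim : Tendsto (fun l : ℝ => (√l)⁻¹) atTop (nhds 0) :=
    tendsto_inv_atTop_zero.comp Real.tendsto_sqrt_atTop
  refine tendsto_pi_nhds.mpr fun i => tendsto_pi_nhds.mpr fun j => ?_
  exact squeeze_zero_norm' (hbound.mono fun l hl => hl i j) hlim
end

section
/- Let T be a symmetric positive definite p×p real matrix and S symmetric positive semidefinite, with S and T commuting. Then the type-I ridge estimator converges to the target as λ → ∞: lim_{λ→∞} [(λI + (1/4)(S − λT)²)^{1/2} + (1/2)(S − λT)]⁻¹ = T. -/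
/-!
With `X = S - λT`, the matrix `F = f λ` is the positive square root of `λI + X²/4`, hence commutes
with `X`, so `(F + X/2)(F - X/2) = λI` and the estimator equals `λ⁻¹F - (λ⁻¹S - T)/2`.
Moreover `λ⁻¹F` is the positive square root of `λ⁻¹I + (λ⁻¹S - T)²/4`, which tends to `(T/2)²`;
by continuity of the square root on positive semidefinite matrices `λ⁻¹F → T/2`, and the
estimator tends to `T/2 + T/2 = T`.
-/

open Matrix Filter

open scoped ComplexOrder

namespace Matrix

variable {n : Type*} [Fintype n] [DecidableEq n]

open scoped MatrixOrder in
theorem PosSemidef.commute_of_commute_sq {𝕜 : Type*} [RCLike 𝕜] {F X : Matrix n n 𝕜}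
    (hF : F.PosSemidef) (h : Commute (F ^ 2) X) : Commute F X := by
  rw [← CFC.sqrt_sq F hF.nonneg, CFC.sqrt_eq_cfc]
  exact h.cfc_nnreal _

open scoped MatrixOrder Matrix.Norms.L2Operator in
theorem PosSemidef.tendsto_of_tendsto_sq {ι : Type*} {l : Filter ι} {G : ι → Matrix n n ℝ}
    {A : Matrix n n ℝ} (hG : ∀ᶠ i in l, (G i).PosSemidef) (hA : A.PosSemidef)
    (h : Tendsto (fun i => G i ^ 2) l (nhds (A ^ 2))) : Tendsto G l (nhds A) := by
  have hsqrt : Tendsto (fun i => CFC.sqrt (G i ^ 2)) l (nhds (CFC.sqrt (A ^ 2))) :=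
    (CFC.continuousOn_sqrt.continuousWithinAt (hA.pow 2).nonneg).tendsto.comp <|
      tendsto_nhdsWithin_iff.mpr ⟨h, hG.mono fun i hi => (hi.pow 2).nonneg⟩
  rw [CFC.sqrt_sq A hA.nonneg] at hsqrt
  exact hsqrt.congr' <| hG.mono fun i hi => CFC.sqrt_sq (G i) hi.nonneg

section Ridge

variable {K : Type*} [Field K]

theorem inv_add_half_smul_eq {F X : Matrix n n K} {l : K} (hl : l ≠ 0)
    (hFX : Commute F X) (hF : F ^ 2 = l • 1 + (1 / 4 : K) • X ^ 2) :
    (F + (1 / 2 : K) • X)⁻¹ = l⁻¹ • (F - (1 / 2 : K) • X) := by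
  refine inv_eq_right_inv ?_
  have : (F + (1 / 2 : K) • X) * (F - (1 / 2 : K) • X) = F ^ 2 - (1 / 4 : K) • X ^ 2 := by
    simp only [add_mul, mul_sub, smul_mul_assoc, mul_smul_comm, hFX.eq, sq]
    match_scalars <;> norm_num [← mul_inv]
  rw [mul_smul_comm, this, hF, add_sub_cancel_right, smul_smul, inv_mul_cancel₀ hl, one_smul]

theorem inv_smul_sq_eq {F S T : Matrix n n K} {l : K} (hl : l ≠ 0)
    (hF : F ^ 2 = l • 1 + (1 / 4 : K) • (S - l • T) ^ 2) :
    (l⁻¹ • F) ^ 2 = l⁻¹ • 1 + (1 / 4 : K) • (l⁻¹ • S - T) ^ 2 := by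
  have hX : l⁻¹ • S - T = l⁻¹ • (S - l • T) := by
    rw [smul_sub, smul_smul, inv_mul_cancel₀ hl, one_smul]
  rw [hX, smul_pow, smul_pow, hF]
  match_scalars <;> field_simp

end Ridge

theorem tendsto_inv_smul_one_add_sq (S T : Matrix n n ℝ) :
    Tendsto (fun l : ℝ => l⁻¹ • (1 : Matrix n n ℝ) + (1 / 4 : ℝ) • (l⁻¹ • S - T) ^ 2) atTop
      (nhds (((1 / 2 : ℝ) • T) ^ 2)) := by
  have hcont : Continuous fun t : ℝ => t • (1 : Matrix n n ℝ) + (1 / 4 : ℝ) • (t • S - T) ^ 2 := by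
    fun_prop
  refine ((hcont.tendsto 0).comp tendsto_inv_atTop_zero).trans_eq ?_
  simp only [zero_smul, zero_add, zero_sub, smul_pow, neg_sq]
  norm_num

end Matrix

theorem stmt7_general (p : ℕ) (S T : Matrix (Fin p) (Fin p) ℝ)
    (hT : T.PosDef)
    (f : ℝ → Matrix (Fin p) (Fin p) ℝ)
    (hf : ∀ l, 0 < l → (f l).PosDef ∧
      (f l) ^ 2 = l • (1 : Matrix (Fin p) (Fin p) ℝ) + (1/4 : ℝ) • (S - l • T) ^ 2) :
    Tendsto (fun l : ℝ => (f l + (1/2 : ℝ) • (S - l • T))⁻¹)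
      atTop (nhds T) := by
  have hinv : ∀ l, 0 < l →
      (f l + (1/2 : ℝ) • (S - l • T))⁻¹ = l⁻¹ • f l - (1/2 : ℝ) • (l⁻¹ • S - T) := by
    intro l hl
    obtain ⟨hpos, hF2⟩ := hf l hl
    have hcomm : Commute (f l) (S - l • T) := hpos.posSemidef.commute_of_commute_sq <| by
      rw [hF2]
      exact ((Commute.one_left _).smul_left _).add_left ((Commute.pow_left rfl 2).smul_left _)
    rw [inv_add_half_smul_eq hl.ne' hcomm hF2]
    match_scalars <;> field_simp
  have hG : Tendsto (fun l : ℝ => l⁻¹ • f l) atTop (nhds ((1/2 : ℝ) • T)) :=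
    PosSemidef.tendsto_of_tendsto_sq
      ((eventually_gt_atTop 0).mono fun l hl => (hf l hl).1.posSemidef.smul (inv_nonneg.2 hl.le))
      (hT.posSemidef.smul (by norm_num)) <|
      (tendsto_inv_smul_one_add_sq S T).congr' <| (eventually_gt_atTop 0).mono fun l hl =>
        (inv_smul_sq_eq hl.ne' (hf l hl).2).symm
  have hlim := hG.sub (((tendsto_inv_atTop_zero.smul_const S).sub_const T).const_smul (1/2 : ℝ))
  rw [zero_smul, zero_sub, smul_neg, sub_neg_eq_add, ← add_smul] at hlim
  norm_num at hlim
  exact hlim.congr' <| (eventually_gt_atTop 0).mono fun l hl => (hinv l hl).symm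

/-- For T symmetric positive definite and S symmetric PSD with
S and T commuting, the type-I ridge estimator converges to the target T as
λ → ∞. Here `f l` denotes the (unique) symmetric positive definite square
root of λI + (1/4)(S − λT)². -/
theorem stmt7 (p : ℕ) (S T : Matrix (Fin p) (Fin p) ℝ)
    (hS : S.PosSemidef) (hT : T.PosDef) (hcomm : S * T = T * S)
    (f : ℝ → Matrix (Fin p) (Fin p) ℝ)
    (hf : ∀ l, 0 < l → (f l).PosDef ∧
      (f l) ^ 2 = l • (1 : Matrix (Fin p) (Fin p) ℝ) + (1/4 : ℝ) • (S - l • T) ^ 2) :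
    Tendsto (fun l : ℝ => (f l + (1/2 : ℝ) • (S - l • T))⁻¹)
      atTop (nhds T) :=
  stmt7_general p S T hT f hf
end

section
/- Let M be a symmetric p×p real matrix and μ > 0. Then Θ* = (1/μ)[((M/2)² + μI)^{1/2} − M/2] (with (·)^{1/2} the positive definite square root) is symmetric positive definite and satisfies the quadratic matrix equation M Θ* + μ (Θ*)² = I. -/
/-!
By uniqueness of nonnegative square roots, `R` is the function `√((x / 2) ^ 2 + μ)` of `M` in the
continuous functional calculus, so `Θ*` is the function `quadRoot μ` of `M`. Positivity and the
quadratic equation then reduce to the corresponding facts about the real function `quadRoot μ`.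
-/

/-- The positive root `t` of `μ t ^ 2 + x t = 1`. -/
noncomputable def quadRoot (μ x : ℝ) : ℝ := μ⁻¹ * (√((x / 2) ^ 2 + μ) - x / 2)

lemma quadRoot_pos {μ : ℝ} (hμ : 0 < μ) (x : ℝ) : 0 < quadRoot μ x := by
  have : x / 2 < √((x / 2) ^ 2 + μ) := calc
    x / 2 ≤ |x / 2| := le_abs_self _
    _ = √((x / 2) ^ 2) := (Real.sqrt_sq_eq_abs _).symm
    _ < √((x / 2) ^ 2 + μ) := Real.sqrt_lt_sqrt (sq_nonneg _) (by linarith)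
  exact mul_pos (inv_pos.mpr hμ) (sub_pos.mpr this)

lemma mul_quadRoot_add_mul_sq {μ : ℝ} (hμ : 0 < μ) (x : ℝ) :
    x * quadRoot μ x + μ * quadRoot μ x ^ 2 = 1 := by
  have hs := Real.sq_sqrt (show 0 ≤ (x / 2) ^ 2 + μ by positivity)
  unfold quadRoot
  generalize √((x / 2) ^ 2 + μ) = s at hs
  field_simp
  linear_combination 4 * hs

lemma continuous_quadRoot (μ : ℝ) : Continuous (quadRoot μ) := by
  unfold quadRoot; fun_prop

section
variable {A : Type*} [Ring A] [StarRing A] [TopologicalSpace A] [Algebra ℝ A]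
  [ContinuousFunctionalCalculus ℝ A IsSelfAdjoint] {a : A}

lemma cfc_sq_add_const (ha : IsSelfAdjoint a) (μ : ℝ) :
    cfc (fun x => (x / 2) ^ 2 + μ) a = ((1 / 2 : ℝ) • a) ^ 2 + μ • (1 : A) := by
  have : (fun x : ℝ => (x / 2) ^ 2 + μ) = fun x => ((1 / 2 : ℝ) • id x) ^ 2 + μ := by
    ext x; simp [div_eq_inv_mul]
  rw [this, cfc_add .., cfc_pow .., cfc_smul .., cfc_id .., cfc_const μ a,
    Algebra.algebraMap_eq_smul_one]

lemma mul_cfc_quadRoot_add_smul_sq (ha : IsSelfAdjoint a) {μ : ℝ} (hμ : 0 < μ) :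
    a * cfc (quadRoot μ) a + μ • cfc (quadRoot μ) a ^ 2 = 1 := by
  have hf := continuous_quadRoot μ
  calc a * cfc (quadRoot μ) a + μ • cfc (quadRoot μ) a ^ 2
      = cfc (fun x => x * quadRoot μ x + μ • quadRoot μ x ^ 2) a := by
        rw [cfc_add .., cfc_mul .., cfc_id' .., cfc_smul .., cfc_pow ..]
    _ = cfc (fun _ => 1) a := cfc_congr fun x _ => mul_quadRoot_add_mul_sq hμ x
    _ = 1 := cfc_const_one ℝ a

variable [PartialOrder A] [StarOrderedRing A] [NonnegSpectrumClass ℝ A]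

lemma isStrictlyPositive_cfc_quadRoot (ha : IsSelfAdjoint a) {μ : ℝ} (hμ : 0 < μ) :
    IsStrictlyPositive (cfc (quadRoot μ) a) :=
  (cfc_isStrictlyPositive_iff _ _ (continuous_quadRoot μ).continuousOn).mpr
    fun x _ => quadRoot_pos hμ x

variable [IsSemitopologicalRing A] [T2Space A]

lemma eq_cfc_sqrt_of_sq_eq (ha : IsSelfAdjoint a) {μ : ℝ} (hμ : 0 ≤ μ) {r : A} (hr : 0 ≤ r)
    (hr2 : r ^ 2 = ((1 / 2 : ℝ) • a) ^ 2 + μ • (1 : A)) :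
    r = cfc (fun x => √((x / 2) ^ 2 + μ)) a := by
  refine (CFC.sq_eq_sq_iff r _ hr (cfc_nonneg fun x _ => Real.sqrt_nonneg _)).mp ?_
  rw [hr2, ← cfc_sq_add_const ha, ← cfc_pow ..]
  exact cfc_congr fun x _ => (Real.sq_sqrt (by positivity)).symm

lemma smul_sub_eq_cfc_quadRoot (ha : IsSelfAdjoint a) {μ : ℝ} (hμ : 0 < μ) {r : A} (hr : 0 ≤ r)
    (hr2 : r ^ 2 = ((1 / 2 : ℝ) • a) ^ 2 + μ • (1 : A)) :
    μ⁻¹ • (r - (1 / 2 : ℝ) • a) = cfc (quadRoot μ) a := by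
  have : quadRoot μ = fun x => μ⁻¹ * (√((x / 2) ^ 2 + μ) - 2⁻¹ * x) := by
    ext x; rw [quadRoot, div_eq_inv_mul x]
  rw [eq_cfc_sqrt_of_sq_eq ha hμ.le hr hr2, this, cfc_const_mul .., cfc_sub ..,
    cfc_const_mul .., cfc_id' .., one_div]

end

open Matrix

/-- For M symmetric and μ > 0, with R the positive definite square
root of (M/2)² + μI, the matrix Θ* = (1/μ)[((M/2)² + μI)^{1/2} − M/2] is
symmetric positive definite and satisfies M Θ* + μ (Θ*)² = I. -/
theorem stmt10 (p : ℕ) (M : Matrix (Fin p) (Fin p) ℝ) (hM : M.IsHermitian)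
    (μ : ℝ) (hμ : 0 < μ)
    (R : Matrix (Fin p) (Fin p) ℝ) (hR : R.PosDef)
    (hR2 : R ^ 2 = ((1/2 : ℝ) • M) ^ 2 + μ • (1 : Matrix (Fin p) (Fin p) ℝ)) :
    (μ⁻¹ • (R - (1/2 : ℝ) • M)).PosDef ∧
    M * (μ⁻¹ • (R - (1/2 : ℝ) • M)) + μ • (μ⁻¹ • (R - (1/2 : ℝ) • M)) ^ 2 = 1 := by
  open scoped MatrixOrder in
  rw [smul_sub_eq_cfc_quadRoot hM hμ hR.posSemidef.nonneg hR2]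
  exact ⟨(isStrictlyPositive_cfc_quadRoot hM hμ).posDef, mul_cfc_quadRoot_add_smul_sq hM hμ⟩
end

section
/- Let M be a symmetric p×p real matrix and μ > 0. The equation M X + μ X² = I has a unique symmetric positive definite solution, namely X = (1/μ)[((M/2)² + μI)^{1/2} − M/2]. -/
/-!
Completing the square: a symmetric solution `X` commutes with `M` (transpose the equation), so
`S = μ X + M / 2` satisfies `S² = (M / 2)² + μ I`. If `X` is positive definite then so is
`X⁻¹ = M + μ X`, hence so is `S = (μ X + X⁻¹) / 2`, and uniqueness of positive square roots gives
`S = R`. A positive definite solution exists: apply the functional calculus of `M` to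
`t ↦ (√(t² / 4 + μ) - t / 2) / μ`, the positive root of `μ x² + t x = 1`.
-/

open Matrix

section Algebra

variable {A : Type*} [Ring A] [Algebra ℝ A]

lemma Commute.smul_add_half_smul_sq {M X : A} (h : Commute M X) (μ : ℝ) :
    (μ • X + (1/2 : ℝ) • M) ^ 2 = μ • (M * X + μ • X ^ 2) + ((1/2 : ℝ) • M) ^ 2 := by
  simp only [sq, add_mul, mul_add, smul_mul_assoc, mul_smul_comm, smul_smul, h.eq, smul_add]
  module

lemma IsSelfAdjoint.commute_of_mul_add_smul_sq_eq_one [StarRing A] [StarModule ℝ A] {M X : A}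
    (hM : IsSelfAdjoint M) (hX : IsSelfAdjoint X) {μ : ℝ} (h : M * X + μ • X ^ 2 = 1) :
    Commute M X := by
  have h' := congrArg star h
  rw [star_add, star_mul, star_smul, star_pow, hM.star_eq, hX.star_eq, star_trivial,
    star_one] at h'
  exact add_right_cancel (h.trans h'.symm)

end Algebra

namespace Matrix

variable {n : Type*} [Fintype n] [DecidableEq n] {M X R : Matrix n n ℝ} {μ : ℝ}

lemma PosDef.smul_add_half_smul_of_mul_add_smul_sq_eq_one (hX : X.PosDef) (hμ : 0 < μ)
    (h : M * X + μ • X ^ 2 = 1) : (μ • X + (1/2 : ℝ) • M).PosDef := by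
  have hXinv : X⁻¹ = M + μ • X := inv_eq_left_inv (by rw [add_mul, smul_mul_assoc, ← sq, h])
  have hhalf : μ • X + (1/2 : ℝ) • M = (1/2 : ℝ) • (μ • X + X⁻¹) := by rw [hXinv]; module
  rw [hhalf]
  exact ((hX.smul hμ).add hX.inv).smul (by norm_num)

open scoped MatrixOrder in
lemma PosDef.eq_of_mul_add_smul_sq_eq_one (hX : X.PosDef) (hM : M.IsHermitian) (hμ : 0 < μ)
    (hR : R.PosDef) (hR2 : R ^ 2 = ((1/2 : ℝ) • M) ^ 2 + μ • 1)
    (h : M * X + μ • X ^ 2 = 1) : X = μ⁻¹ • (R - (1/2 : ℝ) • M) := by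
  have hsq : (μ • X + (1/2 : ℝ) • M) ^ 2 = R ^ 2 := by
    rw [(hM.isSelfAdjoint.commute_of_mul_add_smul_sq_eq_one hX.1 h).smul_add_half_smul_sq, h,
      hR2, add_comm]
  have hSR : μ • X + (1/2 : ℝ) • M = R :=
    (CFC.sq_eq_sq_iff _ _ (hX.smul_add_half_smul_of_mul_add_smul_sq_eq_one hμ h).posSemidef.nonneg
      hR.posSemidef.nonneg).mp hsq
  rw [← hSR, add_sub_cancel_right, smul_smul, inv_mul_cancel₀ hμ.ne', one_smul]

open scoped MatrixOrder in
lemma IsHermitian.exists_posDef_mul_add_smul_sq_eq_one (hM : M.IsHermitian) (hμ : 0 < μ) :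
    ∃ X : Matrix n n ℝ, X.PosDef ∧ M * X + μ • X ^ 2 = 1 := by
  set f : ℝ → ℝ := fun t => (√(t ^ 2 / 4 + μ) - t / 2) / μ
  have hM' : IsSelfAdjoint M := hM.isSelfAdjoint
  refine ⟨cfc f M, ((cfc_isStrictlyPositive_iff f M).mpr fun t _ => ?_).posDef, ?_⟩
  · have hs := Real.sq_sqrt (by positivity : 0 ≤ t ^ 2 / 4 + μ)
    have : t / 2 < √(t ^ 2 / 4 + μ) := by nlinarith [Real.sqrt_nonneg (t ^ 2 / 4 + μ)]
    exact div_pos (sub_pos.mpr this) hμ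
  · have hf : ∀ t, t * f t + μ * f t ^ 2 = 1 := fun t => by
      have hs := Real.sq_sqrt (by positivity : 0 ≤ t ^ 2 / 4 + μ)
      simp only [f]
      generalize √(t ^ 2 / 4 + μ) = s at hs
      field_simp
      linear_combination 4 * hs
    calc M * cfc f M + μ • cfc f M ^ 2 = cfc (fun t => t * f t + μ * f t ^ 2) M := by
          rw [cfc_add .., cfc_mul .., cfc_id' .., cfc_const_mul .., cfc_pow ..]
      _ = 1 := by simp only [hf]; exact cfc_const_one ℝ M

end Matrix

/-- For M symmetric and μ > 0, the equation M X + μ X² = I has a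
unique symmetric positive definite solution, namely
X = (1/μ)[((M/2)² + μI)^{1/2} − M/2] (R being that positive definite square root). -/
theorem stmt11 (p : ℕ) (M : Matrix (Fin p) (Fin p) ℝ) (hM : M.IsHermitian)
    (μ : ℝ) (hμ : 0 < μ)
    (R : Matrix (Fin p) (Fin p) ℝ) (hR : R.PosDef)
    (hR2 : R ^ 2 = ((1/2 : ℝ) • M) ^ 2 + μ • (1 : Matrix (Fin p) (Fin p) ℝ)) :
    ∀ X : Matrix (Fin p) (Fin p) ℝ,
      (X.PosDef ∧ M * X + μ • X ^ 2 = 1) ↔ X = μ⁻¹ • (R - (1/2 : ℝ) • M) := by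
  intro X
  constructor
  · rintro ⟨hX, h⟩
    exact hX.eq_of_mul_add_smul_sq_eq_one hM hμ hR hR2 h
  · rintro rfl
    obtain ⟨X₀, hX₀, h₀⟩ := hM.exists_posDef_mul_add_smul_sq_eq_one hμ
    rw [← hX₀.eq_of_mul_add_smul_sq_eq_one hM hμ hR hR2 h₀]
    exact ⟨hX₀, h₀⟩
end

section
/- Let S be a symmetric p×p real matrix, Γ and T symmetric matrices, λ₁ ∈ (0,1], λ₂ > 0, and set M = (1−λ₁)S + λ₁Γ − λ₂T (symmetric). Then Θ̂ = [(λ₂I + (1/4)M²)^{1/2} + (1/2)M]⁻¹ is symmetric positive definite and satisfies the normal equation Θ̂⁻¹ − (1−λ₁)S − λ₁Γ − λ₂Θ̂ + λ₂T = 0. -/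
/-!
Since `R² = λ₂ + M²/4` is a polynomial in `M`, the positive square root `R` commutes with `M`,
so `(R + M/2)(R - M/2) = R² - M²/4 = λ₂`. Hence `Θ̂ = λ₂⁻¹ (R - M/2)`, and the normal equation
reduces to `(R + M/2) - M - (R - M/2) = 0`. For positivity, an eigenvalue `a` of `R + M/2` is an
eigenvalue of `R - M/2` with value `λ₂ / a`, and `a + λ₂ / a`, an eigenvalue of `2R`, is positive
only if `a > 0`.
-/

open Matrix

theorem Commute.of_sq_left_of_nonneg {A : Type*} [PartialOrder A] [Ring A] [StarRing A]
    [TopologicalSpace A] [StarOrderedRing A] [Algebra ℝ A]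
    [ContinuousFunctionalCalculus ℝ A IsSelfAdjoint] [NonnegSpectrumClass ℝ A]
    [IsTopologicalRing A] [T2Space A] {a b : A} (ha : 0 ≤ a) (h : Commute (a ^ 2) b) :
    Commute a b :=
  CFC.sqrt_sq a ha ▸ h.cfcₙ_nnreal NNReal.sqrt

theorem add_half_smul_mul_sub_half_smul {A : Type*} [Ring A] [Algebra ℝ A] {r m : A} {c : ℝ}
    (hrm : Commute r m) (hr : r ^ 2 = c • 1 + (1 / 4 : ℝ) • m ^ 2) :
    (r + (1 / 2 : ℝ) • m) * (r - (1 / 2 : ℝ) • m) = c • 1 := by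
  rw [← (hrm.smul_right _).sq_sub_sq, smul_pow, hr]
  norm_num

open scoped ComplexOrder in
theorem Matrix.IsHermitian.posDef_of_mul_eq_smul_one {n 𝕜 : Type*} [Fintype n] [DecidableEq n]
    [RCLike 𝕜] {A B : Matrix n n 𝕜} (hA : A.IsHermitian) {c : ℝ} (hc : 0 < c)
    (hAB : A * B = c • 1) (hpos : (A + B).PosDef) : A.PosDef := by
  have hBA : B * A = c • 1 := by
    have h : (c⁻¹ • B) * A = 1 := mul_eq_one_comm.mp <| by
      rw [mul_smul_comm, hAB, smul_smul, inv_mul_cancel₀ hc.ne', one_smul]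
    rw [smul_mul_assoc] at h
    rw [← h, smul_smul, mul_inv_cancel₀ hc.ne', one_smul]
  refine hA.posDef_iff_eigenvalues_pos.mpr fun j => ?_
  set v : n → 𝕜 := ⇑(hA.eigenvectorBasis j)
  set a := hA.eigenvalues j
  have hv : v ≠ 0 := fun h => hA.eigenvectorBasis.orthonormal.ne_zero j (by simpa [v] using h)
  have hAv : A *ᵥ v = a • v := hA.mulVec_eigenvectorBasis j
  have hBv : (a : 𝕜) * (star v ⬝ᵥ (B *ᵥ v)) = c * (star v ⬝ᵥ v) := by
    have : a • (B *ᵥ v) = c • v := by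
      rw [← mulVec_smul, ← hAv, mulVec_mulVec, hBA, smul_mulVec, one_mulVec]
    simpa [dotProduct_smul, RCLike.real_smul_eq_coe_mul] using congrArg (star v ⬝ᵥ ·) this
  have key : (a : 𝕜) * (star v ⬝ᵥ ((A + B) *ᵥ v)) = ((a ^ 2 + c : ℝ) : 𝕜) * (star v ⬝ᵥ v) := by
    simp only [add_mulVec, hAv, dotProduct_add, dotProduct_smul, RCLike.real_smul_eq_coe_mul]
    push_cast
    linear_combination hBv
  replace key := congrArg RCLike.re key
  rw [RCLike.re_ofReal_mul, RCLike.re_ofReal_mul] at key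
  have hq := hpos.re_dotProduct_pos hv
  have hs : 0 < RCLike.re (star v ⬝ᵥ v) := by simpa using PosDef.one.re_dotProduct_pos hv
  by_contra! ha
  nlinarith [mul_nonpos_of_nonpos_of_nonneg ha hq.le, mul_pos (by positivity : 0 < a ^ 2 + c) hs]

theorem stmt16_general (p : ℕ) (S Γ T : Matrix (Fin p) (Fin p) ℝ)
    (hS : S.IsHermitian) (hΓ : Γ.IsHermitian) (hT : T.IsHermitian)
    (l₁ l₂ : ℝ) (hl₂ : 0 < l₂)
    (R : Matrix (Fin p) (Fin p) ℝ) (hR : R.PosDef)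
    (hR2 : R ^ 2 = l₂ • (1 : Matrix (Fin p) (Fin p) ℝ) +
      (1/4 : ℝ) • ((1 - l₁) • S + l₁ • Γ - l₂ • T) ^ 2) :
    ((R + (1/2 : ℝ) • ((1 - l₁) • S + l₁ • Γ - l₂ • T))⁻¹).PosDef ∧
    ((R + (1/2 : ℝ) • ((1 - l₁) • S + l₁ • Γ - l₂ • T))⁻¹)⁻¹ -
      (1 - l₁) • S - l₁ • Γ -
      l₂ • (R + (1/2 : ℝ) • ((1 - l₁) • S + l₁ • Γ - l₂ • T))⁻¹ + l₂ • T = 0 := by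
  set M := (1 - l₁) • S + l₁ • Γ - l₂ • T
  have hM : M.IsHermitian := ((hS.smul (.all _)).add (hΓ.smul (.all _))).sub (hT.smul (.all _))
  have hRM : Commute R M := by
    open scoped MatrixOrder in
    refine .of_sq_left_of_nonneg hR.posSemidef.nonneg ?_
    rw [hR2]
    exact ((Commute.one_left M).smul_left l₂).add_left (((Commute.refl M).pow_left 2).smul_left _)
  have hAB := add_half_smul_mul_sub_half_smul hRM hR2
  have hright_inv : (R + (1 / 2 : ℝ) • M) * (l₂⁻¹ • (R - (1 / 2 : ℝ) • M)) = 1 := by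
    rw [mul_smul_comm, hAB, smul_smul, inv_mul_cancel₀ hl₂.ne', one_smul]
  have hA : (R + (1 / 2 : ℝ) • M).PosDef :=
    (hR.1.add (hM.smul (.all _))).posDef_of_mul_eq_smul_one hl₂ hAB <| by
      rw [add_add_sub_cancel, ← two_smul ℝ R]
      exact hR.smul two_pos
  refine ⟨hA.inv, ?_⟩
  rw [nonsing_inv_nonsing_inv _ (isUnit_det_of_right_inverse hright_inv), inv_eq_right_inv hright_inv,
    smul_smul, mul_inv_cancel₀ hl₂.ne', one_smul]
  module

/-- With M = (1−λ₁)S + λ₁Γ − λ₂T symmetric and R the positive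
definite square root of λ₂I + (1/4)M², the estimator
Θ̂ = [R + (1/2)M]⁻¹ is symmetric positive definite and satisfies the normal
equation Θ̂⁻¹ − (1−λ₁)S − λ₁Γ − λ₂Θ̂ + λ₂T = 0. -/
theorem stmt16 (p : ℕ) (S Γ T : Matrix (Fin p) (Fin p) ℝ)
    (hS : S.IsHermitian) (hΓ : Γ.IsHermitian) (hT : T.IsHermitian)
    (l₁ l₂ : ℝ) (hl₁0 : 0 < l₁) (hl₁1 : l₁ ≤ 1) (hl₂ : 0 < l₂)
    (R : Matrix (Fin p) (Fin p) ℝ) (hR : R.PosDef)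
    (hR2 : R ^ 2 = l₂ • (1 : Matrix (Fin p) (Fin p) ℝ) +
      (1/4 : ℝ) • ((1 - l₁) • S + l₁ • Γ - l₂ • T) ^ 2) :
    ((R + (1/2 : ℝ) • ((1 - l₁) • S + l₁ • Γ - l₂ • T))⁻¹).PosDef ∧
    ((R + (1/2 : ℝ) • ((1 - l₁) • S + l₁ • Γ - l₂ • T))⁻¹)⁻¹ -
      (1 - l₁) • S - l₁ • Γ -
      l₂ • (R + (1/2 : ℝ) • ((1 - l₁) • S + l₁ • Γ - l₂ • T))⁻¹ + l₂ • T = 0 :=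
  stmt16_general p S Γ T hS hΓ hT l₁ l₂ hl₂ R hR hR2
end
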